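/- arXiv:1804.05368 — 7 statements merged into one kernel-verified Lean document; each statement's English description precedes it below -/
import Mathlib

section
/- Let (v_k)_{k≥0} be a sequence of nonnegative integrable random variables adapted to a filtration (𝓕_k) with E[v_0] < ∞, and let (χ_k) and (β_k) be deterministic scalar sequences such that 0 ≤ χ_k ≤ 1 and β_k ≥ 0 for all k ≥ 0, Σ_{k=0}^∞ χ_k = ∞, Σ_{k=0}^∞ β_k < ∞, lim_{k→∞} β_k/χ_k = 0, and E[v_{k+1} | 𝓕_k] ≤ (1 − χ_k) v_k + β_k almost surely for all k ≥ 0. Then v_k → 0 almost surely as k → ∞. -/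
/-!
Adding the tail sums `∑_{j ≥ k} β_j` to `v_k` produces a nonnegative supermartingale, so `v_k`
converges almost surely. Taking expectations in the recursion gives the deterministic inequality
`E v_{k+1} ≤ (1 - χ_k) E v_k + β_k`, and since `∏ (1 - χ_j) ≤ exp (-∑ χ_j) → 0` while the tail of
`∑ β_j` vanishes, `E v_k → 0`. Thus `v_k → 0` in `L¹`, a subsequence tends to `0` almost surely,
and the almost sure limit must be `0`.
-/

open MeasureTheory Filter Finset
open scoped Topology

section Deterministic

variable {a χ β : ℕ → ℝ}

theorem tendsto_prod_range_one_sub_zero (hχ_nonneg : ∀ k, 0 ≤ χ k) (hχ_le_one : ∀ k, χ k ≤ 1)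
    (hχ_div : ¬ Summable χ) : Tendsto (fun n => ∏ j ∈ range n, (1 - χ j)) atTop (𝓝 0) := by
  have hsum : Tendsto (fun n => ∑ j ∈ range n, χ j) atTop atTop :=
    (not_summable_iff_tendsto_nat_atTop_of_nonneg hχ_nonneg).1 hχ_div
  have hexp : Tendsto (fun n => Real.exp (-∑ j ∈ range n, χ j)) atTop (𝓝 0) :=
    Real.tendsto_exp_atBot.comp (tendsto_neg_atTop_atBot.comp hsum)
  refine squeeze_zero (fun n => prod_nonneg fun j _ => sub_nonneg.2 (hχ_le_one j))
    (fun n => ?_) hexp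
  calc ∏ j ∈ range n, (1 - χ j) ≤ ∏ j ∈ range n, Real.exp (-χ j) :=
        prod_le_prod (fun j _ => sub_nonneg.2 (hχ_le_one j)) fun j _ => Real.one_sub_le_exp_neg _
    _ = Real.exp (-∑ j ∈ range n, χ j) := by rw [← sum_neg_distrib, Real.exp_sum]

theorem le_prod_one_sub_mul_add_sum (hχ_nonneg : ∀ k, 0 ≤ χ k) (hχ_le_one : ∀ k, χ k ≤ 1)
    (hβ : ∀ k, 0 ≤ β k) (hrec : ∀ k, a (k + 1) ≤ (1 - χ k) * a k + β k) (n : ℕ) :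
    a n ≤ (∏ j ∈ range n, (1 - χ j)) * a 0 + ∑ j ∈ range n, β j := by
  induction n with
  | zero => simp
  | succ n ih =>
    have hS : 0 ≤ ∑ j ∈ range n, β j := sum_nonneg fun j _ => hβ j
    calc a (n + 1) ≤ (1 - χ n) * a n + β n := hrec n
      _ ≤ (1 - χ n) * ((∏ j ∈ range n, (1 - χ j)) * a 0 + ∑ j ∈ range n, β j) + β n := by
          gcongr; linarith [hχ_le_one n]
      _ ≤ (∏ j ∈ range (n + 1), (1 - χ j)) * a 0 + ∑ j ∈ range (n + 1), β j := by
          rw [prod_range_succ, sum_range_succ]; nlinarith [hχ_nonneg n]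

theorem tendsto_zero_of_le_one_sub_mul_add (ha : ∀ k, 0 ≤ a k) (hχ_nonneg : ∀ k, 0 ≤ χ k)
    (hχ_le_one : ∀ k, χ k ≤ 1) (hβ : ∀ k, 0 ≤ β k) (hχ_div : ¬ Summable χ) (hβ_sum : Summable β)
    (hrec : ∀ k, a (k + 1) ≤ (1 - χ k) * a k + β k) : Tendsto a atTop (𝓝 0) := by
  refine tendsto_order.2 ⟨fun ε hε => Eventually.of_forall fun k => hε.trans_le (ha k),
    fun ε hε => ?_⟩
  -- Restart the recursion at an index `N` beyond which the remaining `β`-mass is below `ε / 2`.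
  obtain ⟨N, hN⟩ :=
    ((tendsto_order.1 (tendsto_sum_nat_add β)).2 (ε / 2) (half_pos hε)).exists_forall_of_atTop
  have hprod := (tendsto_prod_range_one_sub_zero (fun k => hχ_nonneg (k + N))
    (fun k => hχ_le_one (k + N)) (by rwa [summable_nat_add_iff])).mul_const (a N)
  rw [zero_mul] at hprod
  obtain ⟨M, hM⟩ := eventually_atTop.1 ((tendsto_order.1 hprod).2 (ε / 2) (half_pos hε))
  refine eventually_atTop.2 ⟨M + N, fun n hn => ?_⟩
  obtain ⟨m, rfl⟩ : ∃ m, n = m + N := ⟨n - N, by omega⟩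
  have hle := le_prod_one_sub_mul_add_sum (a := fun k => a (k + N)) (fun k => hχ_nonneg (k + N))
    (fun k => hχ_le_one (k + N)) (fun k => hβ (k + N))
    (fun k => by simpa [add_right_comm] using hrec (k + N)) m
  have htail : ∑ j ∈ range m, β (j + N) ≤ ∑' j, β (j + N) :=
    Summable.sum_le_tsum _ (fun j _ => hβ (j + N)) ((summable_nat_add_iff N).2 hβ_sum)
  simp only [zero_add] at hle
  linarith [hM m (by omega), hN N le_rfl]

end Deterministic

theorem eLpNorm_one_eq_ofReal_integral {Ω : Type*} {m0 : MeasurableSpace Ω} {P : Measure Ω}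
    {f : Ω → ℝ} (hf_int : Integrable f P) (hf_nonneg : 0 ≤ᵐ[P] f) :
    eLpNorm f 1 P = ENNReal.ofReal (∫ ω, f ω ∂P) := by
  rw [eLpNorm_one_eq_lintegral_enorm, ← ofReal_integral_norm_eq_lintegral_enorm hf_int,
    integral_congr_ae (hf_nonneg.mono fun ω hω => Real.norm_of_nonneg hω)]

section Stochastic

variable {Ω : Type*} {m0 : MeasurableSpace Ω} {P : Measure Ω} {ℱ : Filtration ℕ m0}
  {v : ℕ → Ω → ℝ} {β : ℕ → ℝ}

theorem MeasureTheory.Supermartingale.exists_ae_tendsto_of_nonneg [IsFiniteMeasure P]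
    {f : ℕ → Ω → ℝ} (hf : Supermartingale f ℱ P) (hf_nonneg : ∀ n, 0 ≤ᵐ[P] f n) :
    ∀ᵐ ω ∂P, ∃ c, Tendsto (fun n => f n ω) atTop (𝓝 c) := by
  have hbdd : ∀ n, eLpNorm ((-f) n) 1 P ≤ ENNReal.ofReal (∫ ω, f 0 ω ∂P) := fun n => by
    rw [Pi.neg_apply, eLpNorm_neg, eLpNorm_one_eq_ofReal_integral (hf.integrable n) (hf_nonneg n)]
    simpa using ENNReal.ofReal_le_ofReal (hf.setIntegral_le (Nat.zero_le n) MeasurableSet.univ)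
  filter_upwards [hf.neg.exists_ae_tendsto_of_bdd hbdd] with ω ⟨c, hc⟩
  exact ⟨-c, by simpa using hc.neg⟩

theorem tsum_nat_add_eq_add_tsum (hβ_sum : Summable β) (n : ℕ) :
    ∑' j, β (j + n) = β n + ∑' j, β (j + (n + 1)) := by
  rw [((summable_nat_add_iff n).2 hβ_sum).tsum_eq_zero_add]
  simp only [zero_add, add_right_comm _ 1 n, add_assoc]

theorem supermartingale_add_tsum_nat_add [IsFiniteMeasure P] (hv_int : ∀ n, Integrable (v n) P)
    (hv_adapted : Adapted ℱ v) (hβ_sum : Summable β)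
    (hrec : ∀ n, P[v (n + 1) | ℱ n] ≤ᵐ[P] fun ω => v n ω + β n) :
    Supermartingale (fun n ω => v n ω + ∑' j, β (j + n)) ℱ P := by
  refine supermartingale_nat (fun n => ((hv_adapted n).add measurable_const).stronglyMeasurable)
    (fun n => (hv_int n).add (integrable_const _)) fun n => ?_
  filter_upwards [condExp_add (hv_int (n + 1)) (integrable_const (∑' j, β (j + (n + 1)))) (ℱ n),
    hrec n] with ω hadd hω
  change P[v (n + 1) + fun _ => ∑' j, β (j + (n + 1)) | ℱ n] ω ≤ _
  rw [hadd, Pi.add_apply, condExp_const (ℱ.le n), tsum_nat_add_eq_add_tsum hβ_sum n]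
  linarith

theorem integral_succ_le_of_condExp_le [IsProbabilityMeasure P] {χ : ℕ → ℝ}
    (hv_int : ∀ n, Integrable (v n) P)
    (hrec : ∀ n, P[v (n + 1) | ℱ n] ≤ᵐ[P] fun ω => (1 - χ n) * v n ω + β n) (n : ℕ) :
    ∫ ω, v (n + 1) ω ∂P ≤ (1 - χ n) * ∫ ω, v n ω ∂P + β n := by
  calc ∫ ω, v (n + 1) ω ∂P = ∫ ω, P[v (n + 1) | ℱ n] ω ∂P := (integral_condExp (ℱ.le n)).symm
    _ ≤ ∫ ω, (1 - χ n) * v n ω + β n ∂P :=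
        integral_mono_ae integrable_condExp (((hv_int n).const_mul _).add (integrable_const _))
          (hrec n)
    _ = (1 - χ n) * ∫ ω, v n ω ∂P + β n := by
        rw [integral_add ((hv_int n).const_mul _) (integrable_const _), integral_const_mul]
        simp

theorem ae_tendsto_zero_of_ae_tendsto_of_tendsto_integral (hv_int : ∀ n, Integrable (v n) P)
    (hv_nonneg : ∀ n, 0 ≤ᵐ[P] v n)
    (hconv : ∀ᵐ ω ∂P, ∃ c, Tendsto (fun n => v n ω) atTop (𝓝 c))
    (hmean : Tendsto (fun n => ∫ ω, v n ω ∂P) atTop (𝓝 0)) :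
    ∀ᵐ ω ∂P, Tendsto (fun n => v n ω) atTop (𝓝 0) := by
  have hL1 : Tendsto (fun n => eLpNorm (v n - 0) 1 P) atTop (𝓝 0) := by
    simp_rw [sub_zero, eLpNorm_one_eq_ofReal_integral (hv_int _) (hv_nonneg _)]
    simpa using ENNReal.tendsto_ofReal hmean
  obtain ⟨ns, hns, hsub⟩ := (tendstoInMeasure_of_tendsto_eLpNorm one_ne_zero
    (fun n => (hv_int n).aestronglyMeasurable) aestronglyMeasurable_const hL1).exists_seq_tendsto_ae
  filter_upwards [hconv, hsub] with ω ⟨c, hc⟩ hω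
  rwa [tendsto_nhds_unique (hc.comp hns.tendsto_atTop) hω] at hc

end Stochastic

theorem supermartingale_convergence_general
    {Ω : Type*} {m0 : MeasurableSpace Ω} (P : Measure Ω) [IsProbabilityMeasure P]
    (ℱ : Filtration ℕ m0)
    (v : ℕ → Ω → ℝ) (χ β : ℕ → ℝ)
    (hv_nonneg : ∀ k ω, 0 ≤ v k ω)
    (hv_int : ∀ k, Integrable (v k) P)
    (hv_adapted : Adapted ℱ v)
    (hχ : ∀ k, 0 ≤ χ k ∧ χ k ≤ 1) (hβ : ∀ k, 0 ≤ β k)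
    (hχ_div : ¬ Summable χ)
    (hβ_sum : Summable β)
    (hrec : ∀ k, P[v (k + 1) | ℱ k] ≤ᵐ[P] fun ω => (1 - χ k) * v k ω + β k) :
    ∀ᵐ ω ∂P, Tendsto (fun k => v k ω) atTop (𝓝 0) := by
  have hrec_drift : ∀ k, P[v (k + 1) | ℱ k] ≤ᵐ[P] fun ω => v k ω + β k := fun k =>
    (hrec k).mono fun ω hω => hω.trans (by nlinarith [hv_nonneg k ω, hχ k])
  have hconv_tail : ∀ᵐ ω ∂P, ∃ c, Tendsto (fun k => v k ω + ∑' j, β (j + k)) atTop (𝓝 c) :=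
    (supermartingale_add_tsum_nat_add hv_int hv_adapted hβ_sum
      hrec_drift).exists_ae_tendsto_of_nonneg fun k =>
        Eventually.of_forall fun ω => add_nonneg (hv_nonneg k ω) (tsum_nonneg fun j => hβ _)
  have hconv : ∀ᵐ ω ∂P, ∃ c, Tendsto (fun k => v k ω) atTop (𝓝 c) := by
    filter_upwards [hconv_tail] with ω ⟨c, hc⟩
    exact ⟨c, by simpa using hc.sub (tendsto_sum_nat_add β)⟩
  have hmean : Tendsto (fun k => ∫ ω, v k ω ∂P) atTop (𝓝 0) :=
    tendsto_zero_of_le_one_sub_mul_add (fun k => integral_nonneg (hv_nonneg k))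
      (fun k => (hχ k).1) (fun k => (hχ k).2) hβ hχ_div hβ_sum
      (integral_succ_le_of_condExp_le hv_int hrec)
  exact ae_tendsto_zero_of_ae_tendsto_of_tendsto_integral hv_int
    (fun k => Eventually.of_forall (hv_nonneg k)) hconv hmean

/-- Robbins–Siegmund type super-martingale convergence lemma. -/
theorem supermartingale_convergence
    {Ω : Type*} {m0 : MeasurableSpace Ω} (P : Measure Ω) [IsProbabilityMeasure P]
    (ℱ : Filtration ℕ m0)
    (v : ℕ → Ω → ℝ) (χ β : ℕ → ℝ)
    (hv_nonneg : ∀ k ω, 0 ≤ v k ω)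
    (hv_int : ∀ k, Integrable (v k) P)
    (hv_adapted : Adapted ℱ v)
    (hχ : ∀ k, 0 ≤ χ k ∧ χ k ≤ 1) (hβ : ∀ k, 0 ≤ β k)
    (hχ_div : ¬ Summable χ)
    (hβ_sum : Summable β)
    (hratio : Tendsto (fun k => β k / χ k) atTop (𝓝 0))
    (hrec : ∀ k, P[v (k + 1) | ℱ k] ≤ᵐ[P] fun ω => (1 - χ k) * v k ω + β k) :
    ∀ᵐ ω ∂P, Tendsto (fun k => v k ω) atTop (𝓝 0) :=
  supermartingale_convergence_general P ℱ v χ β hv_nonneg hv_int hv_adapted hχ hβ hχ_div hβ_sum hrec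
end

section
/- Let f : ℝ^n → ℝ be convex, continuous, and bounded below, and for η > 0 let f_η denote its Moreau envelope. Then a point x* ∈ ℝ^n is a minimizer of f over ℝ^n if and only if x* is a minimizer of f_η over ℝ^n. -/
noncomputable section

/-- The Moreau envelope retains the minimizers of a convex,
continuous, bounded-below function. -/
theorem moreau_envelope_minimizers
    {n : ℕ} (f : EuclideanSpace ℝ (Fin n) → ℝ)
    (hconv : ConvexOn ℝ Set.univ f) (hcont : Continuous f)
    (hbdd : BddBelow (Set.range f))
    (η : ℝ) (hη : 0 < η)
    (fη : EuclideanSpace ℝ (Fin n) → ℝ)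
    (hfη : ∀ x, fη x = ⨅ u : EuclideanSpace ℝ (Fin n),
      (f u + (1 / (2 * η)) * ‖u - x‖ ^ 2))
    (xstar : EuclideanSpace ℝ (Fin n)) :
    (∀ x, f xstar ≤ f x) ↔ (∀ x, fη xstar ≤ fη x) := by
  have hc : 0 < 1 / (2 * η) := by positivity
  obtain ⟨B, hB⟩ := hbdd
  have hBf : ∀ u, B ≤ f u := fun u => hB (Set.mem_range_self u)
  have hbd : ∀ x : EuclideanSpace ℝ (Fin n),
      BddBelow (Set.range fun u => f u + (1 / (2 * η)) * ‖u - x‖ ^ 2) := by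
    intro x
    refine ⟨B, ?_⟩
    rintro y ⟨u, rfl⟩
    have h1 : 0 ≤ (1 / (2 * η)) * ‖u - x‖ ^ 2 := by positivity
    linarith [hBf u]
  have hle : ∀ x, fη x ≤ f x := by
    intro x
    rw [hfη]
    refine ciInf_le_of_le (hbd x) x ?_
    simp
  constructor
  · -- forward: minimizer of f is minimizer of fη
    intro hmin x
    have h1 : f xstar ≤ fη x := by
      rw [hfη]
      refine le_ciInf fun u => ?_
      have h2 : 0 ≤ (1 / (2 * η)) * ‖u - x‖ ^ 2 := by positivity
      linarith [hmin u]
    exact (hle xstar).trans h1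
  · -- backward
    intro hmin x
    -- m = inf f
    set m := sInf (Set.range f) with hm
    have hmle : ∀ u, m ≤ f u := fun u => csInf_le ⟨B, hB⟩ (Set.mem_range_self u)
    have hstar_le : fη xstar ≤ m := by
      refine le_csInf (Set.range_nonempty f) ?_
      rintro y ⟨u, rfl⟩
      exact (hmin u).trans (hle u)
    -- show f xstar ≤ m, then done since m ≤ f x
    have key : f xstar ≤ m := by
      by_contra hlt
      push_neg at hlt
      set ε := (f xstar - m) / 3 with hε
      have hεpos : 0 < ε := by linarith
      obtain ⟨δ, hδpos, hδ⟩ := Metric.continuous_iff.mp hcont xstar ε hεpos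
      set ε' := min ε ((1 / (2 * η)) * δ ^ 2) with hε'
      have hε'pos : 0 < ε' := lt_min hεpos (by positivity)
      have hlt2 : (⨅ u : EuclideanSpace ℝ (Fin n),
          (f u + (1 / (2 * η)) * ‖u - xstar‖ ^ 2)) < fη xstar + ε' := by
        rw [← hfη]; linarith
      obtain ⟨u, hu⟩ := exists_lt_of_ciInf_lt hlt2
      have hfu : m ≤ f u := hmle u
      have hquad : (1 / (2 * η)) * ‖u - xstar‖ ^ 2 < ε' := by
        have := hstar_le
        linarith
      have hnorm : ‖u - xstar‖ < δ := by
        have h1 : (1 / (2 * η)) * ‖u - xstar‖ ^ 2 < (1 / (2 * η)) * δ ^ 2 :=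
          lt_of_lt_of_le hquad (min_le_right _ _)
        have h2 : ‖u - xstar‖ ^ 2 < δ ^ 2 := by
          have := (mul_lt_mul_iff_right₀ hc).mp h1
          exact this
        nlinarith [norm_nonneg (u - xstar)]
      have hdist : dist u xstar < δ := by rwa [dist_eq_norm]
      have hclose : dist (f u) (f xstar) < ε := hδ u hdist
      have habs : |f u - f xstar| < ε := by rwa [Real.dist_eq] at hclose
      have h3 : f xstar - ε < f u := by
        have := abs_lt.mp habs
        linarith [this.1]
      have hfu_lt : f u < fη xstar + ε' := by
        have h4 : 0 ≤ (1 / (2 * η)) * ‖u - xstar‖ ^ 2 := by positivity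
        linarith
      have hε'le : ε' ≤ ε := min_le_left _ _
      -- f xstar - ε < f u < fη xstar + ε' ≤ m + ε, so f xstar < m + 2ε = m + 2(fxstar-m)/3
      linarith
    exact key.trans (hmle x)
end
end

section
/- Let f : ℝ^n → ℝ be convex and continuous, let σ > 0, η > 0, and let f_η denote the Moreau envelope of f. Then f is σ-strongly convex on ℝ^n if and only if f_η is σ/(ησ + 1)-strongly convex on ℝ^n. -/
/-!
Write `κ = ησ + 1` and `q(u, x) = σ/2 ‖u‖² + 1/(2η) ‖u - x‖² - σ/(2κ) ‖x‖²`; completing the square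
gives `q(u, x) = ‖κu - x‖² / (2ηκ)`, a convex function of `(u, x)`.

If `f - σ/2 ‖·‖²` is convex, then `f(u) + 1/(2η) ‖u - x‖² - σ/(2κ) ‖x‖²` is jointly convex in
`(u, x)`, and minimising out `u` keeps it convex in `x`: this is `f_η - σ/(2κ) ‖·‖²`.

Conversely, let `h = f_η - σ/(2κ) ‖·‖²` be convex. Always `f(u) ≥ f_η(x) - ‖u - x‖²/(2η)`, with
equality at `x = u + ηw` for a subgradient `w` of `f` at `u`. By the identity, `f - σ/2 ‖·‖²` is
thus the pointwise maximum over `y` of the convex functions `u ↦ h(κu + y) - ‖y‖²/(2ηκ)`.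
-/

open Set
open scoped RealInnerProductSpace

theorem ConvexOn.of_forall_le_of_exists_ge {E ι : Type*} [AddCommGroup E] [Module ℝ E]
    {s : Set E} {g : E → ℝ} {φ : ι → E → ℝ} (hs : Convex ℝ s) (hφ : ∀ i, ConvexOn ℝ s (φ i))
    (hle : ∀ i, ∀ x ∈ s, φ i x ≤ g x) (htouch : ∀ x ∈ s, ∃ i, g x ≤ φ i x) :
    ConvexOn ℝ s g := by
  refine ⟨hs, fun x hx y hy a b ha hb hab => ?_⟩
  obtain ⟨i, hi⟩ := htouch _ (hs hx hy ha hb hab)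
  calc g (a • x + b • y) ≤ φ i (a • x + b • y) := hi
    _ ≤ a • φ i x + b • φ i y := (hφ i).2 hx hy ha hb hab
    _ ≤ a • g x + b • g y := by gcongr <;> apply hle <;> assumption

theorem ConvexOn.ciInf_fst {E F : Type*} [AddCommGroup E] [Module ℝ E] [Nonempty E]
    [AddCommGroup F] [Module ℝ F] {g : E × F → ℝ} (hg : ConvexOn ℝ univ g)
    (hbdd : ∀ x, BddBelow (range fun u => g (u, x))) :
    ConvexOn ℝ univ fun x => ⨅ u, g (u, x) := by
  refine ⟨convex_univ, fun x _ y _ a b ha hb hab => ?_⟩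
  refine le_of_forall_pos_le_add fun ε hε => ?_
  obtain ⟨u, hu⟩ := exists_lt_of_ciInf_lt (lt_add_of_pos_right (⨅ u, g (u, x)) hε)
  obtain ⟨v, hv⟩ := exists_lt_of_ciInf_lt (lt_add_of_pos_right (⨅ v, g (v, y)) hε)
  calc ⨅ w, g (w, a • x + b • y) ≤ g (a • (u, x) + b • (v, y)) := by
        simpa using ciInf_le (hbdd _) (a • u + b • v)
    _ ≤ a • g (u, x) + b • g (v, y) := hg.2 trivial trivial ha hb hab
    _ ≤ a • ((⨅ u, g (u, x)) + ε) + b • ((⨅ v, g (v, y)) + ε) := by gcongr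
    _ = a • (⨅ u, g (u, x)) + b • (⨅ v, g (v, y)) + ε := by
        simp only [smul_eq_mul]; linear_combination ε * hab

/-- Where the infimum is unbounded below, this is the junk value `0`. -/
noncomputable def moreauEnvelope {E : Type*} [SeminormedAddCommGroup E] (f : E → ℝ) (η : ℝ)
    (x : E) : ℝ :=
  ⨅ u, f u + 1 / (2 * η) * ‖u - x‖ ^ 2

theorem moreauEnvelope_le {E : Type*} [SeminormedAddCommGroup E] {f : E → ℝ} {η : ℝ} {x : E}
    (hbdd : BddBelow (range fun v => f v + 1 / (2 * η) * ‖v - x‖ ^ 2)) (u : E) :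
    moreauEnvelope f η x ≤ f u + 1 / (2 * η) * ‖u - x‖ ^ 2 :=
  ciInf_le hbdd u

variable {F : Type*} [NormedAddCommGroup F] [InnerProductSpace ℝ F]

def HasSubgradientAt (f : F → ℝ) (w u : F) : Prop :=
  ∀ v, f u + ⟪w, v - u⟫ ≤ f v

theorem ConvexOn.exists_hasSubgradientAt [CompleteSpace F] {f : F → ℝ}
    (hf : ConvexOn ℝ univ f) (hcont : Continuous f) (u : F) : ∃ w, HasSubgradientAt f w u := by
  obtain ⟨φ, hφ⟩ := geometric_hahn_banach_open_point (s := {p : F × ℝ | f p.1 < p.2})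
    (x := (u, f u)) (by simpa using hf.convex_strict_epigraph)
    (isOpen_lt (hcont.comp continuous_fst) continuous_snd) (lt_irrefl (f u))
  have hsplit : ∀ x t, φ (x, t) = φ (x, 0) + t * φ (0, 1) := fun x t => by
    rw [← smul_eq_mul, ← map_smul, ← map_add]; simp
  set μ := -φ (0, 1)
  have hμ : 0 < μ := by
    have := hφ (u, f u + 1) (by simp)
    rw [hsplit, hsplit u (f u)] at this
    linarith
  refine ⟨(InnerProductSpace.toDual ℝ F).symm (μ⁻¹ • φ.comp (.inl ℝ F ℝ)), fun v => ?_⟩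
  rw [InnerProductSpace.toDual_symm_apply]
  simp only [smul_apply, ContinuousLinearMap.comp_apply,
    ContinuousLinearMap.inl_apply, smul_eq_mul]
  have hlt : ∀ t, f v < t → φ (v - u, 0) < μ * (t - f u) := fun t ht => by
    have := hφ (v, t) ht
    rw [hsplit, hsplit u] at this
    have hdiff : φ (v - u, 0) = φ (v, 0) - φ (u, 0) := by rw [← map_sub]; simp
    linarith
  have hle : φ (v - u, 0) ≤ μ * (f v - f u) := le_of_forall_pos_lt_add fun ε hε => by
    simpa [mul_add, mul_div_cancel₀ _ hμ.ne', add_sub_right_comm] using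
      hlt (f v + ε / μ) (lt_add_of_pos_right _ (div_pos hε hμ))
  have := (inv_mul_le_iff₀ hμ).2 hle
  linarith

/-- Completing the square: the quadratic form on the left is positive semidefinite in `(u, x)`,
which is where the modulus `σ / (η * σ + 1)` comes from. -/
theorem moreau_quadratic_eq {σ η : ℝ} (hη : η ≠ 0) (hκ : η * σ + 1 ≠ 0) (u x : F) :
    σ / 2 * ‖u‖ ^ 2 + 1 / (2 * η) * ‖u - x‖ ^ 2 - σ / (η * σ + 1) / 2 * ‖x‖ ^ 2 =
      ‖(η * σ + 1) • u - x‖ ^ 2 / (2 * η * (η * σ + 1)) := by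
  rw [norm_sub_sq_real, norm_sub_sq_real, norm_smul, real_inner_smul_left, Real.norm_eq_abs,
    mul_pow, sq_abs]
  have hκ' : σ * η + 1 ≠ 0 := by rwa [mul_comm]
  field_simp
  ring

section MoreauEnvelope

variable {f : F → ℝ} {η : ℝ}

theorem HasSubgradientAt.le_add_moreau (hη : 0 < η) {w u : F} (hw : HasSubgradientAt f w u)
    (x v : F) : f u + ⟪w, x - u⟫ - η / 2 * ‖w‖ ^ 2 ≤ f v + 1 / (2 * η) * ‖v - x‖ ^ 2 := by
  have hsq : 0 ≤ ‖v - x + η • w‖ ^ 2 / (2 * η) := by positivity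
  rw [norm_add_sq_real, norm_smul, real_inner_smul_right, Real.norm_eq_abs, mul_pow, sq_abs]
    at hsq
  have hsplit : ⟪w, v - u⟫ = ⟪w, v - x⟫ + ⟪w, x - u⟫ := by
    rw [← inner_add_right, sub_add_sub_cancel]
  have := hw v
  rw [real_inner_comm] at hsq
  field_simp at hsq ⊢
  nlinarith

theorem HasSubgradientAt.bddBelow_moreau (hη : 0 < η) {w u : F} (hw : HasSubgradientAt f w u)
    (x : F) : BddBelow (range fun v => f v + 1 / (2 * η) * ‖v - x‖ ^ 2) :=
  ⟨_, forall_mem_range.2 (hw.le_add_moreau hη x)⟩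

theorem HasSubgradientAt.add_le_moreauEnvelope (hη : 0 < η) {w u : F}
    (hw : HasSubgradientAt f w u) :
    f u + 1 / (2 * η) * ‖u - (u + η • w)‖ ^ 2 ≤ moreauEnvelope f η (u + η • w) := by
  refine le_ciInf fun v => le_trans (le_of_eq ?_) (hw.le_add_moreau hη _ v)
  rw [sub_add_cancel_left, norm_neg, add_sub_cancel_left, real_inner_smul_right,
    real_inner_self_eq_norm_sq, norm_smul, Real.norm_eq_abs, mul_pow, sq_abs]
  field_simp
  ring

theorem StrongConvexOn.moreauEnvelope {σ : ℝ} (hf : StrongConvexOn univ σ f) (hσ : 0 ≤ σ)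
    (hη : 0 < η) (hbdd : ∀ x, BddBelow (range fun u => f u + 1 / (2 * η) * ‖u - x‖ ^ 2)) :
    StrongConvexOn univ (σ / (η * σ + 1)) (moreauEnvelope f η) := by
  have hκ : 0 < η * σ + 1 := by positivity
  rw [strongConvexOn_iff_convex] at hf ⊢
  set G : F × F → ℝ := fun p =>
    f p.1 + 1 / (2 * η) * ‖p.1 - p.2‖ ^ 2 - σ / (η * σ + 1) / 2 * ‖p.2‖ ^ 2
  have hnorm : ConvexOn ℝ univ fun p : F × F =>
      ‖(η * σ + 1) • p.1 - p.2‖ ^ 2 / (2 * η * (η * σ + 1)) := by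
    have := (((convexOn_norm convex_univ).pow (fun _ _ => norm_nonneg _) 2).comp_linearMap
      ((η * σ + 1) • LinearMap.fst ℝ F F - LinearMap.snd ℝ F F)).smul
      (inv_nonneg.2 (by positivity : (0 : ℝ) ≤ 2 * η * (η * σ + 1)))
    simpa [div_eq_inv_mul] using this
  have hG : ConvexOn ℝ univ G := by
    refine ((hf.comp_linearMap (LinearMap.fst ℝ F F)).add hnorm).congr fun p _ => ?_
    simp only [G, Pi.add_apply, Function.comp_apply, LinearMap.fst_apply,
      ← moreau_quadratic_eq hη.ne' hκ.ne']
    ring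
  refine (hG.ciInf_fst fun x => ?_).congr fun x _ =>
    (ciInf_sub (hbdd x) (σ / (η * σ + 1) / 2 * ‖x‖ ^ 2)).symm
  obtain ⟨m, hm⟩ := hbdd x
  refine ⟨m - σ / (η * σ + 1) / 2 * ‖x‖ ^ 2, forall_mem_range.2 fun u => ?_⟩
  simpa [G] using hm (mem_range_self u)

theorem strongConvexOn_of_moreauEnvelope {σ : ℝ} (hσ : 0 ≤ σ) (hη : 0 < η)
    (hsub : ∀ u, ∃ w, HasSubgradientAt f w u)
    (h : StrongConvexOn univ (σ / (η * σ + 1)) (moreauEnvelope f η)) :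
    StrongConvexOn univ σ f := by
  have hκ : 0 < η * σ + 1 := by positivity
  obtain ⟨w₀, hw₀⟩ := hsub 0
  rw [strongConvexOn_iff_convex] at h ⊢
  set κ := η * σ + 1
  set φ : F → F → ℝ := fun y u =>
    moreauEnvelope f η (κ • u + y) - σ / κ / 2 * ‖κ • u + y‖ ^ 2 - ‖y‖ ^ 2 / (2 * η * κ)
  have hφ : ∀ y u, φ y u = moreauEnvelope f η (κ • u + y) - σ / 2 * ‖u‖ ^ 2 -
      1 / (2 * η) * ‖u - (κ • u + y)‖ ^ 2 := fun y u => by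
    have := moreau_quadratic_eq hη.ne' hκ.ne' u (κ • u + y)
    rw [sub_add_cancel_left, norm_neg] at this
    simp only [φ]
    linarith
  refine .of_forall_le_of_exists_ge convex_univ (φ := φ) (fun y => ?_) (fun y u _ => ?_)
    (fun u _ => ?_)
  · refine (((h.translate_right y).comp_linearMap (κ • LinearMap.id)).add_const
      (-(‖y‖ ^ 2 / (2 * η * κ)))).congr fun u _ => ?_
    simp [φ, add_comm y, sub_eq_add_neg]
  · have := moreauEnvelope_le (hw₀.bddBelow_moreau hη (κ • u + y)) u
    rw [hφ]
    linarith
  · obtain ⟨w, hw⟩ := hsub u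
    refine ⟨u + η • w - κ • u, ?_⟩
    have := hw.add_le_moreauEnvelope hη
    rw [hφ, add_sub_cancel]
    linarith

end MoreauEnvelope

/-- `f` is `σ`-strongly convex iff its Moreau envelope `f_η` is
`σ/(ησ+1)`-strongly convex. -/
theorem moreau_envelope_strong_convexity
    {n : ℕ} (f : EuclideanSpace ℝ (Fin n) → ℝ)
    (hconv : ConvexOn ℝ Set.univ f) (hcont : Continuous f)
    (σ η : ℝ) (hσ : 0 < σ) (hη : 0 < η)
    (fη : EuclideanSpace ℝ (Fin n) → ℝ)
    (hfη : ∀ x, fη x = ⨅ u : EuclideanSpace ℝ (Fin n),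
      (f u + (1 / (2 * η)) * ‖u - x‖ ^ 2)) :
    StrongConvexOn Set.univ σ f ↔ StrongConvexOn Set.univ (σ / (η * σ + 1)) fη := by
  obtain rfl : fη = moreauEnvelope f η := funext hfη
  have hsub : ∀ u, ∃ w, HasSubgradientAt f w u := hconv.exists_hasSubgradientAt hcont
  obtain ⟨w, hw⟩ := hsub 0
  exact ⟨fun hf => hf.moreauEnvelope hσ.le hη (hw.bddBelow_moreau hη),
    strongConvexOn_of_moreauEnvelope hσ.le hη hsub⟩
end

section
/- Let f, g : ℝ^n → ℝ be continuous and τ-strongly convex (τ > 0), let η > 0 and x ∈ ℝ^n. Let u_f be the unique minimizer of u ↦ f(u) + (1/(2η))‖u − x‖² and u_g the unique minimizer of u ↦ g(u) + (1/(2η))‖u − x‖². Then f(u_g) − g(u_g) + g(u_f) − f(u_f) ≥ (τ + 1/η)·‖u_f − u_g‖². -/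
/-! Adding the proximal term `q = (1/(2η))‖· - x‖²` makes `F = f + q` and `G = g + q` both
`(τ + 1/η)`-strongly convex, with minimizers `u_f` and `u_g`. A strongly convex function grows
quadratically away from its minimizer, so `F u_g - F u_f` and `G u_f - G u_g` are each at least
`(τ + 1/η)/2 · ‖u_f - u_g‖²`; in the sum of the two bounds the `q` terms cancel. -/

open Set

section StrongConvexity

variable {E : Type*} [NormedAddCommGroup E] [InnerProductSpace ℝ E]
  {s : Set E} {m m' : ℝ} {f g : E → ℝ}

lemma StrongConvexOn.add (hf : StrongConvexOn s m f) (hg : StrongConvexOn s m' g) :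
    StrongConvexOn s (m + m') (f + g) := by
  unfold StrongConvexOn
  convert UniformConvexOn.add hf hg using 2 with r
  simp only [Pi.add_apply]
  ring

lemma strongConvexOn_mul_norm_sub_sq (hs : Convex ℝ s) (c : ℝ) (x : E) :
    StrongConvexOn s (2 * c) fun u ↦ c * ‖u - x‖ ^ 2 := by
  rw [strongConvexOn_iff_convex]
  have h_affine : (fun u ↦ c * ‖u - x‖ ^ 2 - 2 * c / 2 * ‖u‖ ^ 2)
      = fun u ↦ c * ‖x‖ ^ 2 + (-(2 * c) • innerₛₗ ℝ x) u := by
    funext u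
    rw [norm_sub_sq_real, LinearMap.smul_apply, innerₛₗ_apply_apply, real_inner_comm, smul_eq_mul]
    ring
  rw [h_affine]
  exact (convexOn_const _ hs).add ((-(2 * c) • innerₛₗ ℝ x).convexOn hs)

lemma StrongConvexOn.mul_sq_norm_sub_le_of_isMinOn {x y : E} (hf : StrongConvexOn s m f)
    (hx : x ∈ s) (hy : y ∈ s) (hmin : IsMinOn f s x) :
    m / 2 * ‖y - x‖ ^ 2 ≤ f y - f x := by
  have h_segment : ∀ t ∈ Ioo (0 : ℝ) 1, (1 - t) * (m / 2 * ‖y - x‖ ^ 2) ≤ f y - f x := by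
    rintro t ⟨ht₀, ht₁⟩
    have h_convex := hf.2 hx hy (sub_nonneg.2 ht₁.le) ht₀.le (sub_add_cancel 1 t)
    have h_min := hmin (hf.1 hx hy (sub_nonneg.2 ht₁.le) ht₀.le (sub_add_cancel 1 t))
    rw [smul_eq_mul, smul_eq_mul, norm_sub_rev] at h_convex
    have h_scaled : t * ((1 - t) * (m / 2 * ‖y - x‖ ^ 2)) ≤ t * (f y - f x) := by
      linarith [show f x ≤ _ from h_min]
    exact le_of_mul_le_mul_left h_scaled ht₀
  have h_lim : Filter.Tendsto (fun t : ℝ ↦ (1 - t) * (m / 2 * ‖y - x‖ ^ 2))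
      (nhdsWithin 0 (Ioi 0)) (nhds (m / 2 * ‖y - x‖ ^ 2)) := by
    have h_cont : Continuous fun t : ℝ ↦ (1 - t) * (m / 2 * ‖y - x‖ ^ 2) := by fun_prop
    simpa using (h_cont.tendsto 0).mono_left nhdsWithin_le_nhds
  refine le_of_tendsto h_lim ?_
  filter_upwards [Ioo_mem_nhdsGT (zero_lt_one' ℝ)] with t ht
  exact h_segment t ht

end StrongConvexity

theorem prox_points_strong_monotonicity_general
    {n : ℕ} (f g : EuclideanSpace ℝ (Fin n) → ℝ)
    (τ η : ℝ)
    (hfsc : StrongConvexOn Set.univ τ f) (hgsc : StrongConvexOn Set.univ τ g)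
    (x uf ug : EuclideanSpace ℝ (Fin n))
    (huf : ∀ u, f uf + (1 / (2 * η)) * ‖uf - x‖ ^ 2 ≤ f u + (1 / (2 * η)) * ‖u - x‖ ^ 2)
    (hug : ∀ u, g ug + (1 / (2 * η)) * ‖ug - x‖ ^ 2 ≤ g u + (1 / (2 * η)) * ‖u - x‖ ^ 2) :
    (τ + 1 / η) * ‖uf - ug‖ ^ 2 ≤ f ug - g ug + g uf - f uf := by
  have h_prox : StrongConvexOn univ (1 / η) fun u ↦ 1 / (2 * η) * ‖u - x‖ ^ 2 := by
    have h := strongConvexOn_mul_norm_sub_sq convex_univ (1 / (2 * η)) x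
    rwa [show 2 * (1 / (2 * η)) = 1 / η by ring] at h
  have h_growth_f := (hfsc.add h_prox).mul_sq_norm_sub_le_of_isMinOn (mem_univ uf) (mem_univ ug)
    (isMinOn_univ_iff.2 huf)
  have h_growth_g := (hgsc.add h_prox).mul_sq_norm_sub_le_of_isMinOn (mem_univ ug) (mem_univ uf)
    (isMinOn_univ_iff.2 hug)
  simp only [Pi.add_apply] at h_growth_f h_growth_g
  rw [norm_sub_rev] at h_growth_f
  linarith

/-- Strong monotonicity bound for proximal points of two
`τ`-strongly convex functions at the same base point. -/
theorem prox_points_strong_monotonicity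
    {n : ℕ} (f g : EuclideanSpace ℝ (Fin n) → ℝ)
    (τ η : ℝ) (hτ : 0 < τ) (hη : 0 < η)
    (hfcont : Continuous f) (hgcont : Continuous g)
    (hfsc : StrongConvexOn Set.univ τ f) (hgsc : StrongConvexOn Set.univ τ g)
    (x uf ug : EuclideanSpace ℝ (Fin n))
    (huf : ∀ u, f uf + (1 / (2 * η)) * ‖uf - x‖ ^ 2 ≤ f u + (1 / (2 * η)) * ‖u - x‖ ^ 2)
    (hug : ∀ u, g ug + (1 / (2 * η)) * ‖ug - x‖ ^ 2 ≤ g u + (1 / (2 * η)) * ‖u - x‖ ^ 2) :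
    (τ + 1 / η) * ‖uf - ug‖ ^ 2 ≤ f ug - g ug + g uf - f uf :=
  prox_points_strong_monotonicity_general f g τ η hfsc hgsc x uf ug huf hug
end

section
/- Let x₁, x₂ ∈ ℝ, let 0 < η₂ ≤ η₁, and let B ∈ ℝ be a constant satisfying (1/2)B²·(η₁/η₂) ≥ 1. Then η₂·ln(e^{x₁/η₂} + e^{x₂/η₂}) − η₂·ln 2 ≤ η₁·ln(e^{x₁/η₁} + e^{x₂/η₁}) − η₁·ln 2 + (1/2)·(η₁²/η₂ − η₁)·B². -/
/-!
`η ↦ η log ∑ᵢ exp (xᵢ / η)` is the logarithm of the `ℓ^(1/η)` norm of `(exp xᵢ)ᵢ`, so it is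
nondecreasing in `η`, by the superadditivity of `t ↦ t ^ p` for `p ≥ 1`. Hence smoothing with the
smaller parameter `η₂` costs at most the change `(η₁ - η₂) log 2` of the normalising constant, and
`log 2 ≤ 1 ≤ B² η₁ / (2 η₂)` bounds this by `(η₁ - η₂) B² η₁ / (2 η₂) = (η₁² / η₂ - η₁) B² / 2`.
-/

open Finset Real

theorem Real.sum_rpow_le_rpow_sum {ι : Type*} {s : Finset ι} {f : ι → ℝ}
    (hf : ∀ i ∈ s, 0 ≤ f i) {p : ℝ} (hp : 1 ≤ p) :
    ∑ i ∈ s, f i ^ p ≤ (∑ i ∈ s, f i) ^ p := by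
  have hpow : ∀ t : ℝ, 0 ≤ t → t ^ p = t * t ^ (p - 1) := fun t ht => by
    rw [← rpow_one_add' ht (by linarith), add_sub_cancel]
  calc ∑ i ∈ s, f i ^ p = ∑ i ∈ s, f i * f i ^ (p - 1) :=
        sum_congr rfl fun i hi => hpow _ (hf i hi)
    _ ≤ ∑ i ∈ s, f i * (∑ j ∈ s, f j) ^ (p - 1) :=
        sum_le_sum fun i hi => mul_le_mul_of_nonneg_left
          (rpow_le_rpow (hf i hi) (single_le_sum hf hi) (by linarith)) (hf i hi)
    _ = (∑ i ∈ s, f i) ^ p := by rw [← sum_mul, hpow _ (sum_nonneg hf)]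

theorem Real.mul_log_sum_exp_div_le_of_le {ι : Type*} (s : Finset ι) (x : ι → ℝ) {η₁ η₂ : ℝ}
    (hη₂ : 0 < η₂) (hle : η₂ ≤ η₁) :
    η₂ * log (∑ i ∈ s, exp (x i / η₂)) ≤ η₁ * log (∑ i ∈ s, exp (x i / η₁)) := by
  rcases s.eq_empty_or_nonempty with rfl | hs
  · simp
  have hp : 1 ≤ η₁ / η₂ := (one_le_div hη₂).mpr hle
  have hexp : ∀ i, exp (x i / η₁) ^ (η₁ / η₂) = exp (x i / η₂) := fun i => by
    rw [← exp_mul]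
    field_simp [(hη₂.trans_le hle).ne']
  have hsum : ∑ i ∈ s, exp (x i / η₂) ≤ (∑ i ∈ s, exp (x i / η₁)) ^ (η₁ / η₂) := by
    simpa only [hexp] using sum_rpow_le_rpow_sum (fun i _ => (exp_pos (x i / η₁)).le) hp
  have hlog : log (∑ i ∈ s, exp (x i / η₂)) ≤ η₁ / η₂ * log (∑ i ∈ s, exp (x i / η₁)) := by
    rw [← log_rpow (sum_pos (fun i _ => exp_pos _) hs)]
    exact log_le_log (sum_pos (fun i _ => exp_pos _) hs) hsum
  calc η₂ * log (∑ i ∈ s, exp (x i / η₂))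
      ≤ η₂ * (η₁ / η₂ * log (∑ i ∈ s, exp (x i / η₁))) :=
        mul_le_mul_of_nonneg_left hlog hη₂.le
    _ = η₁ * log (∑ i ∈ s, exp (x i / η₁)) := by field_simp

/-- Iterative-smoothing compatibility inequality for the
log-sum-exp smoothing of `max{x₁, x₂}`. -/
theorem logsumexp_smoothing_compatibility
    (x₁ x₂ η₁ η₂ B : ℝ)
    (hη₂ : 0 < η₂) (hle : η₂ ≤ η₁)
    (hB : 1 ≤ (1 / 2) * B ^ 2 * (η₁ / η₂)) :
    η₂ * Real.log (Real.exp (x₁ / η₂) + Real.exp (x₂ / η₂)) - η₂ * Real.log 2 ≤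
      η₁ * Real.log (Real.exp (x₁ / η₁) + Real.exp (x₂ / η₁)) - η₁ * Real.log 2
        + (1 / 2) * (η₁ ^ 2 / η₂ - η₁) * B ^ 2 := by
  have hmono := mul_log_sum_exp_div_le_of_le univ ![x₁, x₂] hη₂ hle
  simp only [Fin.sum_univ_two, Matrix.cons_val_zero, Matrix.cons_val_one] at hmono
  have hlog_two : log 2 ≤ 1 := log_two_lt_d9.le.trans (by norm_num)
  have hgap : (η₁ - η₂) * log 2 ≤ (1 / 2) * (η₁ ^ 2 / η₂ - η₁) * B ^ 2 :=
    calc (η₁ - η₂) * log 2 ≤ (η₁ - η₂) * ((1 / 2) * B ^ 2 * (η₁ / η₂)) :=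
          mul_le_mul_of_nonneg_left (hlog_two.trans hB) (sub_nonneg.mpr hle)
      _ = (1 / 2) * (η₁ ^ 2 / η₂ - η₁) * B ^ 2 := by field_simp
  linarith
end

section
/- Let L̂ > 0 and m, n ≥ 1. Let (s₀, y₀), (s₁, y₁), …, (s_m, y_m) be pairs in ℝ^n × ℝ^n with s_j ≠ 0, s_jᵀ y_j > 0, and ‖y_j‖² ≤ L̂ · (s_jᵀ y_j) for every j. Define B₀ := (‖y₀‖²/(s₀ᵀ y₀))·I and, for j = 1, …, m, B_j := B_{j−1} − (B_{j−1} s_j s_jᵀ B_{j−1})/(s_jᵀ B_{j−1} s_j) + (y_j y_jᵀ)/(y_jᵀ s_j). Then every B_j is symmetric positive definite and trace(B_m) ≤ (m + n)·L̂. -/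
/-!
A BFGS update of a positive definite `B` is positive definite as soon as `sᵀy > 0`: its quadratic
form at `x` is `wᵀBw + (yᵀx)²/(sᵀy)`, where `w` is `x` minus its `B`-orthogonal projection onto
`s`, and `w = 0` forces `x ∥ s`, so `yᵀx ≠ 0`. The update subtracts the positive semidefinite
`B s sᵀ B / sᵀBs` and adds `y yᵀ / yᵀs`, whose trace `‖y‖²/sᵀy` is at most `L̂`; the initial
matrix has trace `n ‖y₀‖²/s₀ᵀy₀ ≤ n L̂`.
-/

open Matrix

noncomputable section

namespace Matrix

variable {ι : Type*} [Fintype ι]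

section Field

variable {K : Type*} [Field K]

def bfgsUpdate (B : Matrix ι ι K) (s y : ι → K) : Matrix ι ι K :=
  B - (s ⬝ᵥ B *ᵥ s)⁻¹ • (B * vecMulVec s s * B) + (y ⬝ᵥ s)⁻¹ • vecMulVec y y

variable {B : Matrix ι ι K}

theorem IsSymm.mul_vecMulVec_mul (hB : B.IsSymm) (s : ι → K) :
    B * vecMulVec s s * B = vecMulVec (B *ᵥ s) (B *ᵥ s) := by
  rw [mul_vecMulVec, vecMulVec_mul, ← mulVec_transpose, hB.eq]

theorem IsSymm.dotProduct_mulVec_comm (hB : B.IsSymm) (x z : ι → K) :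
    x ⬝ᵥ B *ᵥ z = z ⬝ᵥ B *ᵥ x := by
  rw [dotProduct_mulVec, ← mulVec_transpose, hB.eq, dotProduct_comm]

theorem IsSymm.bfgsUpdate_eq (hB : B.IsSymm) (s y : ι → K) :
    B.bfgsUpdate s y =
      B - (s ⬝ᵥ B *ᵥ s)⁻¹ • vecMulVec (B *ᵥ s) (B *ᵥ s) + (y ⬝ᵥ s)⁻¹ • vecMulVec y y := by
  rw [bfgsUpdate, hB.mul_vecMulVec_mul]

theorem IsSymm.bfgsUpdate (hB : B.IsSymm) (s y : ι → K) : (B.bfgsUpdate s y).IsSymm := by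
  rw [IsSymm, hB.bfgsUpdate_eq, transpose_add, transpose_sub, transpose_smul, transpose_smul,
    transpose_vecMulVec, transpose_vecMulVec, hB.eq]

theorem IsSymm.dotProduct_bfgsUpdate_mulVec (hB : B.IsSymm) (s y x : ι → K) :
    x ⬝ᵥ B.bfgsUpdate s y *ᵥ x =
      x ⬝ᵥ B *ᵥ x - (s ⬝ᵥ B *ᵥ x) ^ 2 / (s ⬝ᵥ B *ᵥ s) + (y ⬝ᵥ x) ^ 2 / (s ⬝ᵥ y) := by
  simp only [hB.bfgsUpdate_eq, add_mulVec, sub_mulVec, smul_mulVec, vecMulVec_mulVec,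
    dotProduct_add, dotProduct_sub, dotProduct_smul, smul_eq_mul, MulOpposite.smul_eq_mul_unop,
    MulOpposite.unop_op]
  rw [dotProduct_comm (B *ᵥ s), hB.dotProduct_mulVec_comm x s, dotProduct_comm y s,
    dotProduct_comm x y]
  ring

theorem IsSymm.dotProduct_mulVec_sub_proj (hB : B.IsSymm) {s : ι → K}
    (hs : s ⬝ᵥ B *ᵥ s ≠ 0) (x : ι → K) :
    (x - ((s ⬝ᵥ B *ᵥ x) / (s ⬝ᵥ B *ᵥ s)) • s) ⬝ᵥ
        B *ᵥ (x - ((s ⬝ᵥ B *ᵥ x) / (s ⬝ᵥ B *ᵥ s)) • s) =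
      x ⬝ᵥ B *ᵥ x - (s ⬝ᵥ B *ᵥ x) ^ 2 / (s ⬝ᵥ B *ᵥ s) := by
  simp only [mulVec_sub, mulVec_smul, sub_dotProduct, dotProduct_sub, smul_dotProduct,
    dotProduct_smul, smul_eq_mul, hB.dotProduct_mulVec_comm x s]
  field_simp
  ring

end Field

variable {B : Matrix ι ι ℝ}

theorem PosDef.bfgsUpdate (hB : B.PosDef) {s y : ι → ℝ} (hsy : 0 < s ⬝ᵥ y) :
    (B.bfgsUpdate s y).PosDef := by
  have hBsym : B.IsSymm := isHermitian_iff_isSymm.1 hB.isHermitian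
  have hpos {z : ι → ℝ} (hz : z ≠ 0) : 0 < z ⬝ᵥ B *ᵥ z := by
    simpa using hB.dotProduct_mulVec_pos hz
  have hs : s ≠ 0 := by rintro rfl; simp at hsy
  refine .of_dotProduct_mulVec_pos (isHermitian_iff_isSymm.2 (hBsym.bfgsUpdate s y))
    fun x hx => ?_
  rw [star_trivial, hBsym.dotProduct_bfgsUpdate_mulVec,
    ← hBsym.dotProduct_mulVec_sub_proj (hpos hs).ne']
  generalize (s ⬝ᵥ B *ᵥ x) / (s ⬝ᵥ B *ᵥ s) = t
  rcases eq_or_ne (x - t • s) 0 with hw | hw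
  · obtain rfl : x = t • s := sub_eq_zero.1 hw
    have ht : t ≠ 0 := by rintro rfl; simp at hx
    rw [hw, zero_dotProduct, zero_add, dotProduct_smul, smul_eq_mul, dotProduct_comm y s]
    positivity
  · exact add_pos_of_pos_of_nonneg (hpos hw) (by positivity)

theorem PosSemidef.trace_bfgsUpdate_le (hB : B.PosSemidef) (s y : ι → ℝ) :
    (B.bfgsUpdate s y).trace ≤ B.trace + (y ⬝ᵥ y) / (s ⬝ᵥ y) := by
  have hBsym : B.IsSymm := isHermitian_iff_isSymm.1 hB.isHermitian
  have hsBs : 0 ≤ s ⬝ᵥ B *ᵥ s := by simpa using hB.dotProduct_mulVec_nonneg s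
  have hBs : 0 ≤ B *ᵥ s ⬝ᵥ B *ᵥ s := by simpa using dotProduct_star_self_nonneg (B *ᵥ s)
  rw [hBsym.bfgsUpdate_eq, trace_add, trace_sub, trace_smul, trace_smul, trace_vecMulVec,
    trace_vecMulVec, smul_eq_mul, smul_eq_mul, dotProduct_comm y s, ← div_eq_inv_mul,
    ← div_eq_inv_mul]
  linarith [div_nonneg hBs hsBs]

end Matrix

theorem lbfgs_trace_bound_general
    {n : ℕ} (m : ℕ) (Lhat : ℝ)
    (s y : ℕ → (Fin n → ℝ))
    (hsy : ∀ j, j ≤ m → 0 < s j ⬝ᵥ y j)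
    (hyL : ∀ j, j ≤ m → y j ⬝ᵥ y j ≤ Lhat * (s j ⬝ᵥ y j))
    (B : ℕ → Matrix (Fin n) (Fin n) ℝ)
    (hB0 : B 0 = ((y 0 ⬝ᵥ y 0) / (s 0 ⬝ᵥ y 0)) • (1 : Matrix (Fin n) (Fin n) ℝ))
    (hBstep : ∀ j, 1 ≤ j → j ≤ m →
      B j = B (j - 1)
        - (s j ⬝ᵥ (B (j - 1)).mulVec (s j))⁻¹
            • (B (j - 1) * vecMulVec (s j) (s j) * B (j - 1))
        + (y j ⬝ᵥ s j)⁻¹ • vecMulVec (y j) (y j)) :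
    (∀ j, j ≤ m → (B j).IsSymm ∧ (B j).PosDef) ∧
      (B m).trace ≤ (m + n : ℝ) * Lhat := by
  have hratio (j : ℕ) (hj : j ≤ m) : (y j ⬝ᵥ y j) / (s j ⬝ᵥ y j) ≤ Lhat :=
    (div_le_iff₀ (hsy j hj)).2 (hyL j hj)
  have posDef_and_trace_le (j : ℕ) (hj : j ≤ m) :
      (B j).PosDef ∧ (B j).trace ≤ (j + n : ℝ) * Lhat := by
    induction j with
    | zero =>
      have hy : y 0 ≠ 0 := by rintro h; simpa [h] using hsy 0 hj
      have hyy : 0 < y 0 ⬝ᵥ y 0 := by simpa using dotProduct_star_self_pos_iff.2 hy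
      rw [hB0, trace_smul, trace_one, Fintype.card_fin, smul_eq_mul]
      refine ⟨PosDef.one.smul (div_pos hyy (hsy 0 hj)), ?_⟩
      calc _ ≤ Lhat * n := mul_le_mul_of_nonneg_right (hratio 0 hj) n.cast_nonneg
        _ = _ := by push_cast; ring
    | succ j ih =>
      obtain ⟨hpd, htr⟩ := ih (by omega)
      rw [show B (j + 1) = (B j).bfgsUpdate (s (j + 1)) (y (j + 1)) from hBstep _ (by omega) hj]
      refine ⟨hpd.bfgsUpdate (hsy _ hj), ?_⟩
      have := hpd.posSemidef.trace_bfgsUpdate_le (s (j + 1)) (y (j + 1))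
      push_cast
      linarith [hratio _ hj]
  refine ⟨fun j hj => ?_, (posDef_and_trace_le m le_rfl).2⟩
  have hpd := (posDef_and_trace_le j hj).1
  exact ⟨isHermitian_iff_isSymm.1 hpd.isHermitian, hpd⟩

/-- The m-step direct (L-)BFGS recursion started from a scaled
identity produces symmetric positive definite matrices whose final trace is at
most `(m + n)·L̂`. -/
theorem lbfgs_trace_bound
    {n : ℕ} (m : ℕ) (hm : 1 ≤ m) (hn : 1 ≤ n) (Lhat : ℝ) (hL : 0 < Lhat)
    (s y : ℕ → (Fin n → ℝ))
    (hs : ∀ j, j ≤ m → s j ≠ 0)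
    (hsy : ∀ j, j ≤ m → 0 < s j ⬝ᵥ y j)
    (hyL : ∀ j, j ≤ m → y j ⬝ᵥ y j ≤ Lhat * (s j ⬝ᵥ y j))
    (B : ℕ → Matrix (Fin n) (Fin n) ℝ)
    (hB0 : B 0 = ((y 0 ⬝ᵥ y 0) / (s 0 ⬝ᵥ y 0)) • (1 : Matrix (Fin n) (Fin n) ℝ))
    (hBstep : ∀ j, 1 ≤ j → j ≤ m →
      B j = B (j - 1)
        - (s j ⬝ᵥ (B (j - 1)).mulVec (s j))⁻¹
            • (B (j - 1) * vecMulVec (s j) (s j) * B (j - 1))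
        + (y j ⬝ᵥ s j)⁻¹ • vecMulVec (y j) (y j)) :
    (∀ j, j ≤ m → (B j).IsSymm ∧ (B j).PosDef) ∧
      (B m).trace ≤ (m + n : ℝ) * Lhat :=
  lbfgs_trace_bound_general m Lhat s y hsy hyL B hB0 hBstep
end
end

section
/- Let n ≥ 1 and let 0 < a₁ ≤ a₂ ≤ … ≤ a_n be real numbers, and let P, S > 0 be scalars such that Σ_{i=1}^n a_i ≤ S and Π_{i=1}^n a_i ≥ P. Then a₁ ≥ (n−1)!·P / S^{n−1}. -/
/-!
For a monotone nonnegative family, `a i` is at most the average of `a i, …, a (n - 1)`, so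
`(n - i) * a i ≤ ∑ a ≤ S`. Multiplying these bounds over `i ≥ 1` gives
`(n - 1)! * ∏_{i ≥ 1} a i ≤ S ^ (n - 1)`, and `P ≤ a 0 * ∏_{i ≥ 1} a i` then bounds `a 0`.
-/

open Finset
open scoped Nat

theorem Monotone.card_Ici_nsmul_le_sum {ι M : Type*} [Fintype ι] [Preorder ι]
    [LocallyFiniteOrderTop ι] [AddCommMonoid M] [PartialOrder M] [IsOrderedAddMonoid M]
    {a : ι → M} (hmono : Monotone a) (hnonneg : ∀ j, 0 ≤ a j) (i : ι) :
    #(Ici i) • a i ≤ ∑ j, a j :=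
  calc #(Ici i) • a i = ∑ _j ∈ Ici i, a i := (sum_const _).symm
    _ ≤ ∑ j ∈ Ici i, a j := sum_le_sum fun _ hj ↦ hmono (mem_Ici.mp hj)
    _ ≤ ∑ j, a j := sum_le_sum_of_subset_of_nonneg (subset_univ _) fun j _ _ ↦ hnonneg j

theorem Fin.prod_sub_eq_factorial (m : ℕ) : ∏ i : Fin m, (m - i : ℕ) = m ! := by
  rw [Fin.prod_univ_eq_prod_range (fun i ↦ m - i), ← Nat.descFactorial_eq_prod_range,
    Nat.descFactorial_self]

theorem factorial_mul_prod_succ_le_sum_pow {m : ℕ} {a : Fin (m + 1) → ℝ}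
    (hmono : Monotone a) (hnonneg : ∀ i, 0 ≤ a i) :
    (m ! : ℝ) * ∏ i : Fin m, a i.succ ≤ (∑ i, a i) ^ m := by
  have hterm (i : Fin m) : ((m - i : ℕ) : ℝ) * a i.succ ≤ ∑ j, a j := by
    have := hmono.card_Ici_nsmul_le_sum hnonneg i.succ
    rwa [Fin.card_Ici, Fin.val_succ, Nat.add_sub_add_right, nsmul_eq_mul] at this
  calc (m ! : ℝ) * ∏ i : Fin m, a i.succ
      = ∏ i : Fin m, ((m - i : ℕ) : ℝ) * a i.succ := by
        rw [prod_mul_distrib, ← Nat.cast_prod, Fin.prod_sub_eq_factorial]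
    _ ≤ ∏ _i : Fin m, ∑ j, a j :=
        prod_le_prod (fun i _ ↦ mul_nonneg (Nat.cast_nonneg _) (hnonneg _)) fun i _ ↦ hterm i
    _ = (∑ j, a j) ^ m := by rw [prod_const, card_univ, Fintype.card_fin]

theorem min_lower_bound_from_trace_det_general
    {n : ℕ} (hn : 0 < n) (a : Fin n → ℝ) (P S : ℝ)
    (hpos : ∀ i, 0 < a i) (hmono : Monotone a)
    (hS : 0 < S)
    (hsum : ∑ i, a i ≤ S) (hprod : P ≤ ∏ i, a i) :
    (Nat.factorial (n - 1) : ℝ) * P / S ^ (n - 1) ≤ a ⟨0, hn⟩ := by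
  obtain ⟨m, rfl⟩ := Nat.exists_eq_add_one_of_ne_zero hn.ne'
  have hnonneg (i : Fin (m + 1)) : 0 ≤ a i := (hpos i).le
  have htail := factorial_mul_prod_succ_le_sum_pow hmono hnonneg
  have hsum_pow : (∑ i, a i) ^ m ≤ S ^ m :=
    pow_le_pow_left₀ (sum_nonneg fun i _ ↦ hnonneg i) hsum m
  rw [Fin.prod_univ_succ] at hprod
  rw [Nat.add_sub_cancel, div_le_iff₀ (pow_pos hS m)]
  calc (m ! : ℝ) * P ≤ m ! * (a 0 * ∏ i : Fin m, a i.succ) := by gcongr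
    _ = a 0 * (m ! * ∏ i : Fin m, a i.succ) := by ring
    _ ≤ a 0 * S ^ m := by gcongr; exacts [hnonneg 0, htail.trans hsum_pow]

/-- Lower bound on the smallest of `n` ordered positive reals
from an upper bound `S` on their sum and a lower bound `P` on their product. -/
theorem min_lower_bound_from_trace_det
    {n : ℕ} (hn : 0 < n) (a : Fin n → ℝ) (P S : ℝ)
    (hpos : ∀ i, 0 < a i) (hmono : Monotone a)
    (hP : 0 < P) (hS : 0 < S)
    (hsum : ∑ i, a i ≤ S) (hprod : P ≤ ∏ i, a i) :
    (Nat.factorial (n - 1) : ℝ) * P / S ^ (n - 1) ≤ a ⟨0, hn⟩ :=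
  min_lower_bound_from_trace_det_general hn a P S hpos hmono hS hsum hprod
end
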